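/- Every λG-term t : A reduces in finitely many steps to a term in parallel form, using only the permutation reductions. -/

import Mathlib

/-- Formulas (= types) built from atoms, ⊥, ∧ and →. -/
inductive Form where
  | atom : ℕ → Form
  | bot  : Form
  | conj : Form → Form → Form
  | imp  : Form → Form → Form
deriving DecidableEq

/-- Terms of the λG-calculus: simply typed λ-terms extended with the parallel
operator u ∥ₐ v (the channel a is annotated with its communication kind B, C). -/
inductive Tm where
  | var : ℕ → Tm
  | lam : ℕ → Form → Tm → Tm
  | app : Tm → Tm → Tm
  | pair : Tm → Tm → Tm
  | proj : Bool → Tm → Tm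
  | efq : ℕ → Tm → Tm
  | par : ℕ → Form → Form → Tm → Tm → Tm
deriving DecidableEq

/-- Free variables of a λG-term; in u ∥ₐ v the channel a is bound. -/
def FV : Tm → Set ℕ
  | .var x => {x}
  | .lam x _ u => FV u \ {x}
  | .app u w => FV u ∪ FV w
  | .pair u v => FV u ∪ FV v
  | .proj _ u => FV u
  | .efq _ u => FV u
  | .par a _ _ u v => (FV u ∪ FV v) \ {a}

/-- A term is a simply typed λ-term iff it contains no parallel operator. -/
def NoPar : Tm → Prop
  | .var _ => True
  | .lam _ _ u => NoPar u
  | .app u w => NoPar u ∧ NoPar w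
  | .pair u v => NoPar u ∧ NoPar v
  | .proj _ u => NoPar u
  | .efq _ u => NoPar u
  | .par _ _ _ _ _ => False

def IsLam : Tm → Prop
  | .lam _ _ _ => True
  | _ => False

def IsPair : Tm → Prop
  | .pair _ _ => True
  | _ => False

def IsPar : Tm → Prop
  | .par _ _ _ _ _ => True
  | _ => False
def upd (Γ : ℕ → Option Form) (x : ℕ) (A : Form) : ℕ → Option Form :=
  fun y => if y = x then some A else Γ y

/-- Typing for λG: simply typed λ-calculus rules plus the (com) rule, which
types u ∥ₐ v : A from u : A under a : B→C and v : A under a : C→B. -/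
inductive Typed : (ℕ → Option Form) → Tm → Form → Prop
  | var : Γ x = some A → Typed Γ (.var x) A
  | lam : Typed (upd Γ x A) u B → Typed Γ (.lam x A u) (.imp A B)
  | app : Typed Γ u (.imp A B) → Typed Γ w A → Typed Γ (.app u w) B
  | pair : Typed Γ u A → Typed Γ v B → Typed Γ (.pair u v) (.conj A B)
  | projL : Typed Γ u (.conj A B) → Typed Γ (.proj false u) A
  | projR : Typed Γ u (.conj A B) → Typed Γ (.proj true u) B
  | efq : Typed Γ u .bot → Typed Γ (.efq n u) (.atom n)
  | par : Typed (upd Γ a (.imp B C)) u A → Typed (upd Γ a (.imp C B)) v A →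
      Typed Γ (.par a B C u v) A

/-- All variables occurring in a term (free, bound, or as binders). -/
def Vars : Tm → Set ℕ
  | .var x => {x}
  | .lam x _ u => {x} ∪ Vars u
  | .app u w => Vars u ∪ Vars w
  | .pair u v => Vars u ∪ Vars v
  | .proj _ u => Vars u
  | .efq _ u => Vars u
  | .par a _ _ u v => {a} ∪ Vars u ∪ Vars v

/-- Replace the free variable a by c (c assumed totally fresh). -/
def ren (a c : ℕ) : Tm → Tm
  | .var x => if x = a then .var c else .var x
  | .lam x A u => if x = a then .lam x A u else .lam x A (ren a c u)
  | .app u w => .app (ren a c u) (ren a c w)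
  | .pair u v => .pair (ren a c u) (ren a c v)
  | .proj b u => .proj b (ren a c u)
  | .efq n u => .efq n (ren a c u)
  | .par b B C u v =>
      if b = a then .par b B C u v else .par b B C (ren a c u) (ren a c v)

/-- The permutation reductions of λG (together with the standard renaming of
bound channels used to satisfy their freshness side conditions), closed under
arbitrary contexts. -/
inductive Step : Tm → Tm → Prop
  | appL_par : a ∉ FV w → Step (.app (.par a B C u v) w) (.par a B C (.app u w) (.app v w))
  | appR_par : a ∉ FV w → Step (.app w (.par a B C u v)) (.par a B C (.app w u) (.app w v))
  | proj_par : Step (.proj b (.par a B C u v)) (.par a B C (.proj b u) (.proj b v))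
  | lam_par : x ≠ a → Step (.lam x A (.par a B C u v)) (.par a B C (.lam x A u) (.lam x A v))
  | pairL_par : a ∉ FV w → Step (.pair (.par a B C u v) w) (.par a B C (.pair u w) (.pair v w))
  | pairR_par : a ∉ FV w → Step (.pair w (.par a B C u v)) (.par a B C (.pair w u) (.pair w v))
  | efq_par : Step (.efq n (.par a B C u v)) (.par a B C (.efq n u) (.efq n v))
  | alpha : c ∉ Vars u → c ∉ Vars v →
      Step (.par a B C u v) (.par c B C (ren a c u) (ren a c v))
  | lam_cong : Step u u' → Step (.lam x A u) (.lam x A u')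
  | appL_cong : Step u u' → Step (.app u w) (.app u' w)
  | appR_cong : Step w w' → Step (.app u w) (.app u w')
  | pairL_cong : Step u u' → Step (.pair u v) (.pair u' v)
  | pairR_cong : Step v v' → Step (.pair u v) (.pair u v')
  | proj_cong : Step u u' → Step (.proj b u) (.proj b u')
  | efq_cong : Step u u' → Step (.efq n u) (.efq n u')
  | parL_cong : Step u u' → Step (.par a B C u v) (.par a B C u' v)
  | parR_cong : Step v v' → Step (.par a B C u v) (.par a B C u v')

/-- Parallel form: a tree of parallel operators over simply typed λ-terms. -/
inductive ParallelForm : Tm → Prop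
  | base : NoPar t → ParallelForm t
  | par : ParallelForm u → ParallelForm v → ParallelForm (.par a B C u v)

/-!
Parallel operators are pushed outwards through every other constructor by the permutation
reductions. Before a channel crosses a binder or a neighbouring subterm, it is renamed to a
channel occurring nowhere nearby, so the freshness side conditions always hold. Renaming
preserves the size of a term and its being in parallel form, so the pushing terminates by
recursion on size.
-/

open Relation

def size : Tm → ℕ
  | .var _ => 1
  | .lam _ _ u => size u + 1
  | .app u w => size u + size w + 1
  | .pair u v => size u + size v + 1
  | .proj _ u => size u + 1
  | .efq _ u => size u + 1
  | .par _ _ _ u v => size u + size v + 1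

lemma size_ren (a c : ℕ) (t : Tm) : size (ren a c t) = size t := by
  induction t <;> simp only [ren, size, *] <;> split <;> simp only [size, *]

lemma NoPar.ren (a c : ℕ) {t : Tm} (h : NoPar t) : NoPar (ren a c t) := by
  induction t with
  | var x => simp only [_root_.ren]; split <;> trivial
  | lam x A u ih => simp only [_root_.ren]; split; exacts [h, ih h]
  | app u w ihu ihw => exact ⟨ihu h.1, ihw h.2⟩
  | pair u w ihu ihw => exact ⟨ihu h.1, ihw h.2⟩
  | proj b u ih => exact ih h
  | efq n u ih => exact ih h
  | par => exact h.elim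

lemma ParallelForm.ren (a c : ℕ) {t : Tm} (h : ParallelForm t) : ParallelForm (ren a c t) := by
  induction h with
  | base h => exact .base (h.ren a c)
  | @par u v b B C hu hv ihu ihv =>
      simp only [_root_.ren]
      split
      exacts [.par hu hv, .par ihu ihv]

lemma finite_Vars (t : Tm) : (Vars t).Finite := by
  induction t <;> simp [Vars, *]

lemma FV_subset_Vars (t : Tm) : FV t ⊆ Vars t := by
  induction t <;> intro x hx <;> simp_all [FV, Vars] <;> tauto

lemma finite_FV (t : Tm) : (FV t).Finite :=
  (finite_Vars t).subset (FV_subset_Vars t)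

def HasParallelReduct (t : Tm) : Prop :=
  ∃ t', ReflTransGen Step t t' ∧ ParallelForm t'

namespace HasParallelReduct

lemma of_noPar {t : Tm} (h : NoPar t) : HasParallelReduct t :=
  ⟨t, .refl, .base h⟩

lemma of_reflTransGen {t t' : Tm} (r : ReflTransGen Step t t') (h : HasParallelReduct t') :
    HasParallelReduct t :=
  let ⟨t'', r', p⟩ := h
  ⟨t'', r.trans r', p⟩

lemma head {t t' : Tm} (s : Step t t') (h : HasParallelReduct t') : HasParallelReduct t :=
  of_reflTransGen (.single s) h

lemma par {a : ℕ} {B C : Form} {u v : Tm} (hu : HasParallelReduct u) (hv : HasParallelReduct v) :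
    HasParallelReduct (.par a B C u v) := by
  obtain ⟨u', ru, pu⟩ := hu
  obtain ⟨v', rv, pv⟩ := hv
  exact ⟨.par a B C u' v',
    (ru.lift (Tm.par a B C · v) fun _ _ => Step.parL_cong).trans
      (rv.lift (Tm.par a B C u' ·) fun _ _ => Step.parR_cong),
    .par pu pv⟩

theorem of_parallelForm (f : Tm → Tm) (S : Set ℕ) (hS : S.Finite)
    (hcong : ∀ {u u'}, Step u u' → Step (f u) (f u'))
    (hperm : ∀ {a B C u v}, a ∉ S → Step (f (.par a B C u v)) (.par a B C (f u) (f v)))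
    (hbase : ∀ {u}, NoPar u → HasParallelReduct (f u)) {u : Tm} (hu : ParallelForm u) :
    HasParallelReduct (f u) := by
  cases hu with
  | base h => exact hbase h
  | @par u₁ u₂ a B C hu₁ hu₂ =>
      obtain ⟨c, hc⟩ := (((finite_Vars u₁).union (finite_Vars u₂)).union hS).exists_notMem
      simp only [Set.mem_union, not_or] at hc
      obtain ⟨⟨hc₁, hc₂⟩, hcS⟩ := hc
      exact head (hcong (.alpha hc₁ hc₂)) <| head (hperm hcS) <|
        par (of_parallelForm f S hS hcong hperm hbase (hu₁.ren a c))
          (of_parallelForm f S hS hcong hperm hbase (hu₂.ren a c))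
termination_by size u
decreasing_by all_goals simp only [size, size_ren]; omega

theorem map (f : Tm → Tm) (S : Set ℕ) (hS : S.Finite)
    (hcong : ∀ {u u'}, Step u u' → Step (f u) (f u'))
    (hperm : ∀ {a B C u v}, a ∉ S → Step (f (.par a B C u v)) (.par a B C (f u) (f v)))
    (hbase : ∀ {u}, NoPar u → HasParallelReduct (f u)) {u : Tm} (hu : HasParallelReduct u) :
    HasParallelReduct (f u) :=
  let ⟨_, r, p⟩ := hu
  of_reflTransGen (r.lift f fun _ _ => hcong) (of_parallelForm f S hS hcong hperm hbase p)

theorem map₂ (g : Tm → Tm → Tm)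
    (hcongL : ∀ {u u' w}, Step u u' → Step (g u w) (g u' w))
    (hcongR : ∀ {u w w'}, Step w w' → Step (g u w) (g u w'))
    (hpermL : ∀ {a B C u v w}, a ∉ FV w →
      Step (g (.par a B C u v) w) (.par a B C (g u w) (g v w)))
    (hpermR : ∀ {a B C u v w}, a ∉ FV w →
      Step (g w (.par a B C u v)) (.par a B C (g w u) (g w v)))
    (hbase : ∀ {u w}, NoPar u → NoPar w → NoPar (g u w)) {u w : Tm}
    (hu : HasParallelReduct u) (hw : HasParallelReduct w) :
    HasParallelReduct (g u w) :=
  -- push channels out of the left argument, then out of the right one below each left component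
  let ⟨w', r, p⟩ := hw
  of_reflTransGen (r.lift (g u) fun _ _ => hcongR) <|
    hu.map (g · w') (FV w') (finite_FV w') hcongL hpermL fun hu' =>
      of_parallelForm (g _) (FV _) (finite_FV _) hcongR hpermR
        (fun hw' => of_noPar (hbase hu' hw')) p

end HasParallelReduct

theorem reduces_to_parallel_form_general (t : Tm) :
    ∃ t', Relation.ReflTransGen Step t t' ∧ ParallelForm t' := by
  change HasParallelReduct t
  induction t with
  | var x => exact .of_noPar trivial
  | lam x A u ih =>
      exact ih.map (.lam x A) {x} (Set.finite_singleton x) .lam_cong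
        (fun ha => .lam_par fun e => ha e.symm) fun h => .of_noPar h
  | app u w ihu ihw =>
      exact ihu.map₂ .app .appL_cong .appR_cong .appL_par .appR_par
        (fun hu hw => ⟨hu, hw⟩) ihw
  | pair u w ihu ihw =>
      exact ihu.map₂ .pair .pairL_cong .pairR_cong .pairL_par .pairR_par
        (fun hu hw => ⟨hu, hw⟩) ihw
  | proj b u ih =>
      exact ih.map (.proj b) ∅ Set.finite_empty .proj_cong (fun _ => .proj_par)
        fun h => .of_noPar h
  | efq n u ih =>
      exact ih.map (.efq n) ∅ Set.finite_empty .efq_cong (fun _ => .efq_par)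
        fun h => .of_noPar h
  | par a B C u v ihu ihv => exact ihu.par ihv

/-- Every typed λG-term reduces in finitely many steps to a parallel form,
using only the permutation reductions. -/
theorem reduces_to_parallel_form (Γ : ℕ → Option Form) (t : Tm) (A : Form)
    (ht : Typed Γ t A) :
    ∃ t', Relation.ReflTransGen Step t t' ∧ ParallelForm t' :=
  reduces_to_parallel_form_general t
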